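/- Let x = (x_j) be a bounded nonatomic sequence in ℓ¹, and let H = (H_n) be a sequence of nonempty finite subsets of ℕ with |H_n| → ∞. Then the sequence y = (y_n) in ℓ¹ defined by y_n = |H_n|⁻¹ · ∑_{j ∈ H_n} x_j is nonatomic. In particular, taking H_n = {1, …, n}, the sequence of Cesàro means (n⁻¹ ∑_{j=1}^{n} x_j)_n is nonatomic. -/

import Mathlib

open Filter Set

noncomputable def dsub (x : ℕ → lp (fun _ : ℕ => ℝ) 1) (A : Set ℕ) : ℝ :=
  Filter.limsup (fun n => ∑' j : A, |x n j|) Filter.atTop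

def IsBddSeq (x : ℕ → lp (fun _ : ℕ => ℝ) 1) : Prop := ∃ C : ℝ, ∀ n, ‖x n‖ ≤ C

/-- `x` is nonatomic: for every `ε > 0` there is a finite partition of `ℕ`
all of whose pieces have `dsub x`-value at most `ε`. -/
def Nonatomic (x : ℕ → lp (fun _ : ℕ => ℝ) 1) : Prop :=
  ∀ ε : ℝ, 0 < ε → ∃ (m : ℕ) (A : Fin m → Set ℕ),
    (⋃ i, A i) = Set.univ ∧ Pairwise (Function.onFun Disjoint A) ∧
    ∀ i, dsub x (A i) ≤ ε

/-!
Averaging cannot create atoms. For `A ⊆ ℕ` put `s k = ∑_{j ∈ A} |x_k(j)|`; by the triangle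
inequality `d_y(A)` is at most the limsup of the averages of `s` over `H n`. Since `s` is bounded
and `#H n → ∞`, the finitely many terms with `k < N` become negligible in these averages, so their
limsup is at most `limsup s = d_x(A)`. Hence every partition witnessing that `x` is nonatomic also
witnesses it for `y`.
-/

open Topology

namespace lp

lemma summable_abs (f : lp (fun _ : ℕ => ℝ) 1) : Summable fun j => |f j| := by
  simpa [Real.norm_eq_abs] using (lp.memℓp f).summable (p := 1) (by norm_num)

lemma tsum_subtype_abs_le_norm (f : lp (fun _ : ℕ => ℝ) 1) (A : Set ℕ) :
    ∑' j : A, |f j| ≤ ‖f‖ := by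
  have hnorm : ‖f‖ = ∑' j, |f j| := by
    simp [lp.norm_eq_tsum_rpow (by norm_num : (0 : ℝ) < (1 : ENNReal).toReal) f,
      Real.norm_eq_abs]
  rw [hnorm, tsum_subtype A fun j => |f j|]
  exact ((summable_abs f).indicator A).tsum_le_tsum
    (indicator_le_self' fun _ _ => abs_nonneg _) (summable_abs f)

lemma tsum_subtype_abs_smul_sum_le {ι : Type*} (c : ℝ) (s : Finset ι)
    (x : ι → lp (fun _ : ℕ => ℝ) 1) (A : Set ℕ) :
    ∑' j : A, |(c • ∑ k ∈ s, x k) j| ≤ |c| * ∑ k ∈ s, ∑' j : A, |x k j| := by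
  have hsumm : ∀ k, Summable fun j : A => |x k j| := fun k => (summable_abs (x k)).subtype A
  have hpointwise : ∀ j : A, |(c • ∑ k ∈ s, x k) j| ≤ |c| * ∑ k ∈ s, |x k j| := fun j => by
    rw [lp.coeFn_smul, Pi.smul_apply, lp.coeFn_sum, Finset.sum_apply, smul_eq_mul, abs_mul]
    exact mul_le_mul_of_nonneg_left (Finset.abs_sum_le_sum_abs _ _) (abs_nonneg c)
  calc ∑' j : A, |(c • ∑ k ∈ s, x k) j|
      ≤ ∑' j : A, |c| * ∑ k ∈ s, |x k j| :=
        Summable.tsum_le_tsum hpointwise ((summable_abs _).subtype A)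
          ((summable_sum fun k _ => hsumm k).mul_left _)
    _ = |c| * ∑ k ∈ s, ∑' j : A, |x k j| := by
        rw [tsum_mul_left, Summable.tsum_finsetSum fun k _ => hsumm k]

end lp

lemma Finset.sum_le_mul_add_card_mul {s : ℕ → ℝ} {C L : ℝ} {N : ℕ} (hC : ∀ k, s k ≤ C)
    (hC0 : 0 ≤ C) (hL : ∀ k, N ≤ k → s k ≤ L) (hL0 : 0 ≤ L) (H : Finset ℕ) :
    ∑ k ∈ H, s k ≤ N * C + H.card * L := by
  rw [← Finset.sum_filter_add_sum_filter_not H (· < N)]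
  have hhead : ∑ k ∈ H.filter (· < N), s k ≤ N * C :=
    calc ∑ k ∈ H.filter (· < N), s k ≤ (H.filter (· < N)).card * C := by
          simpa using Finset.sum_le_card_nsmul _ _ _ fun k _ => hC k
      _ ≤ N * C := by
          gcongr
          simpa using Finset.card_le_card (s := H.filter (· < N)) (t := Finset.range N)
            fun k hk => by simp_all
  have htail : ∑ k ∈ H.filter (fun k => ¬ k < N), s k ≤ H.card * L :=
    calc ∑ k ∈ H.filter (fun k => ¬ k < N), s k
        ≤ (H.filter (fun k => ¬ k < N)).card * L := by
          simpa using Finset.sum_le_card_nsmul _ _ _ fun k hk =>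
            hL k (not_lt.1 (Finset.mem_filter.1 hk).2)
      _ ≤ H.card * L := by gcongr; exact Finset.filter_subset _ _
  linarith

lemma limsup_finset_average_le {s : ℕ → ℝ} {C : ℝ} (h0 : ∀ k, 0 ≤ s k) (hC : ∀ k, s k ≤ C)
    {H : ℕ → Finset ℕ} (hcard : Tendsto (fun n => (H n).card) atTop atTop) :
    limsup (fun n => ((H n).card : ℝ)⁻¹ * ∑ k ∈ H n, s k) atTop ≤ limsup s atTop := by
  set L := limsup s atTop
  have hC0 : 0 ≤ C := (h0 0).trans (hC 0)
  refine le_of_forall_pos_le_add fun δ hδ => ?_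
  obtain ⟨N, hN⟩ := eventually_atTop.1 <|
    eventually_lt_of_limsup_lt (lt_add_of_pos_right L (half_pos hδ)) (isBoundedUnder_of ⟨C, hC⟩)
  have hL0 : 0 ≤ L + δ / 2 := (h0 N).trans (hN N le_rfl).le
  have hcardR : Tendsto (fun n => ((H n).card : ℝ)) atTop atTop :=
    tendsto_natCast_atTop_atTop.comp hcard
  have hhead : ∀ᶠ n in atTop, N * C / (H n).card ≤ δ / 2 :=
    (tendsto_const_nhds.div_atTop hcardR).eventually (eventually_le_nhds (half_pos hδ))
  refine limsup_le_of_le (isCoboundedUnder_le_of_le atTop fun n =>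
    mul_nonneg (by positivity) (Finset.sum_nonneg fun k _ => h0 k)) ?_
  filter_upwards [hhead, hcardR.eventually_gt_atTop 0] with n hn hpos
  calc ((H n).card : ℝ)⁻¹ * ∑ k ∈ H n, s k
      ≤ ((H n).card : ℝ)⁻¹ * (N * C + (H n).card * (L + δ / 2)) := by
        gcongr
        exact Finset.sum_le_mul_add_card_mul hC hC0 (fun k hk => (hN k hk).le) hL0 _
    _ = N * C / (H n).card + (L + δ / 2) := by field_simp
    _ ≤ L + δ := by linarith

lemma dsub_finset_average_le {x : ℕ → lp (fun _ : ℕ => ℝ) 1} (hx : IsBddSeq x)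
    {H : ℕ → Finset ℕ} (hcard : Tendsto (fun n => (H n).card) atTop atTop) (A : Set ℕ) :
    dsub (fun n => ((H n).card : ℝ)⁻¹ • ∑ j ∈ H n, x j) A ≤ dsub x A := by
  obtain ⟨C, hC⟩ := hx
  set s : ℕ → ℝ := fun k => ∑' j : A, |x k j|
  have h0 : ∀ k, 0 ≤ s k := fun k => tsum_nonneg fun j => abs_nonneg _
  have hsC : ∀ k, s k ≤ C := fun k => (lp.tsum_subtype_abs_le_norm (x k) A).trans (hC k)
  have hpointwise : ∀ n, ∑' j : A, |(((H n).card : ℝ)⁻¹ • ∑ k ∈ H n, x k) j|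
      ≤ ((H n).card : ℝ)⁻¹ * ∑ k ∈ H n, s k := fun n => by
    simpa using lp.tsum_subtype_abs_smul_sum_le ((H n).card : ℝ)⁻¹ (H n) x A
  have havg_le : ∀ n, ((H n).card : ℝ)⁻¹ * ∑ k ∈ H n, s k ≤ C := fun n => by
    rcases (H n).eq_empty_or_nonempty with hempty | hne
    · simpa [hempty] using (h0 0).trans (hsC 0)
    · rw [inv_mul_le_iff₀ (by simpa using hne)]
      simpa using Finset.sum_le_card_nsmul _ _ _ fun k _ => hsC k
  refine (limsup_le_limsup (Eventually.of_forall hpointwise)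
    (isCoboundedUnder_le_of_le atTop fun n => tsum_nonneg fun j => abs_nonneg _)
    (isBoundedUnder_of ⟨C, havg_le⟩)).trans ?_
  exact limsup_finset_average_le h0 hsC hcard

lemma Nonatomic.of_dsub_le {x y : ℕ → lp (fun _ : ℕ => ℝ) 1} (hx : Nonatomic x)
    (hyx : ∀ A, dsub y A ≤ dsub x A) : Nonatomic y := fun ε hε => by
  obtain ⟨m, A, hcover, hdisj, hsmall⟩ := hx ε hε
  exact ⟨m, A, hcover, hdisj, fun i => (hyx (A i)).trans (hsmall i)⟩

theorem stmt_19_general (x : ℕ → lp (fun _ : ℕ => ℝ) 1) (hx : IsBddSeq x)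
    (hnx : Nonatomic x)
    (H : ℕ → Finset ℕ)
    (hcard : Filter.Tendsto (fun n => (H n).card) Filter.atTop Filter.atTop) :
    Nonatomic (fun n => ((H n).card : ℝ)⁻¹ • ∑ j ∈ H n, x j) ∧
    Nonatomic (fun n => ((n : ℝ))⁻¹ • ∑ j ∈ Finset.Icc 1 n, x j) := by
  have haverage : ∀ H : ℕ → Finset ℕ, Tendsto (fun n => (H n).card) atTop atTop →
      Nonatomic (fun n => ((H n).card : ℝ)⁻¹ • ∑ j ∈ H n, x j) := fun H hH =>
    hnx.of_dsub_le (dsub_finset_average_le hx hH)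
  refine ⟨haverage H hcard, ?_⟩
  have hIcc : Tendsto (fun n => (Finset.Icc 1 n).card) atTop atTop := by
    simp only [Nat.card_Icc, Nat.add_sub_cancel]
    exact tendsto_id
  simpa using haverage (fun n => Finset.Icc 1 n) hIcc

theorem stmt_19 (x : ℕ → lp (fun _ : ℕ => ℝ) 1) (hx : IsBddSeq x)
    (hnx : Nonatomic x)
    (H : ℕ → Finset ℕ) (hne : ∀ n, (H n).Nonempty)
    (hcard : Filter.Tendsto (fun n => (H n).card) Filter.atTop Filter.atTop) :
    Nonatomic (fun n => ((H n).card : ℝ)⁻¹ • ∑ j ∈ H n, x j) ∧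
    Nonatomic (fun n => ((n : ℝ))⁻¹ • ∑ j ∈ Finset.Icc 1 n, x j) :=
  stmt_19_general x hx hnx H hcard
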